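/- arXiv:1302.3973 — 5 statements merged into one kernel-verified Lean document; each statement's English description precedes it below -/
import Mathlib

section
/- Let R be a strict well-founded relation on a set E, and suppose E admits a strict well-order ≺₀. Then there exists a strict well-order ≺ on E that contains R (i.e., x R y implies x ≺ y). -/
/-- A strict well-founded relation on a set admitting a strict
well-order extends to a strict well-order. -/
theorem wellordered_extension {E : Type*} (R : E → E → Prop) (r0 : E → E → Prop)
    (hirr : ∀ x, ¬ R x x) (hwf : WellFounded R) (h0 : IsWellOrder E r0) :
    ∃ r : E → E → Prop, IsWellOrder E r ∧ ∀ x y, R x y → r x y := by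
  haveI : IsWellFounded E R := ⟨hwf⟩
  obtain ⟨s, hs, hso⟩ := IsWellFounded.exists_well_order_ge R
  exact ⟨s, hso, fun x y h => hs _ _ h⟩
end

section
/- Let < be a strict linear order on E whose inverse relation <⁻¹ is a strict well-order. Then the collection of <-terminal intervals of E is strictly well-ordered by set-theoretic inclusion. -/
/-!
Terminal intervals of a strict total order `<` are nested: if `a ∈ I \ J` then every element
of `J` lies above `a`, hence in `I`. So strict inclusion is a total order on them, and a
strictly decreasing sequence `I₀ ⊃ I₁ ⊃ ⋯` yields points `xₙ ∈ Iₙ \ Iₙ₊₁` with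
`x₀ < x₁ < ⋯`, which the well-foundedness of `>` forbids.
-/

def IsTerminal {E : Type*} (r : E → E → Prop) (I : Set E) : Prop :=
  ∀ x y, r x y → x ∈ I → y ∈ I

namespace IsTerminal

variable {E : Type*} {r : E → E → Prop} [Std.Trichotomous r] {I J : Set E}

theorem rel_of_notMem_of_mem (hI : IsTerminal r I) {a b : E} (ha : a ∉ I) (hb : b ∈ I) :
    r a b := by
  rcases trichotomous_of r a b with hab | rfl | hba
  · exact hab
  · exact absurd hb ha
  · exact absurd (hI b a hba hb) ha

theorem subset_or_subset (hI : IsTerminal r I) (hJ : IsTerminal r J) : I ⊆ J ∨ J ⊆ I := by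
  refine or_iff_not_imp_left.2 fun hIJ b hb => ?_
  obtain ⟨a, haI, haJ⟩ := Set.not_subset.1 hIJ
  exact hI a b (hJ.rel_of_notMem_of_mem haJ hb) haI

theorem wellFounded_ssubset (hwf : WellFounded fun x y => r y x) :
    WellFounded fun I J : {I : Set E // IsTerminal r I} => I.1 ⊂ J.1 := by
  refine wellFounded_iff_isEmpty_descending_chain.2 ⟨fun ⟨I, hI⟩ => ?_⟩
  choose x hxI hxI' using fun n => Set.exists_of_ssubset (hI n)
  have hx : ∀ n, r (x n) (x (n + 1)) := fun n =>
    (I (n + 1)).2.rel_of_notMem_of_mem (hxI' n) (hxI (n + 1))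
  exact (wellFounded_iff_isEmpty_descending_chain.1 hwf).false ⟨x, hx⟩

theorem trichotomous_ssubset :
    Std.Trichotomous fun I J : {I : Set E // IsTerminal r I} => I.1 ⊂ J.1 where
  trichotomous I J hIJ hJI := Subtype.ext <| by
    rcases I.2.subset_or_subset J.2 with h | h
    · exact h.antisymm (not_not.1 fun h' => hIJ ⟨h, h'⟩)
    · exact (h.antisymm (not_not.1 fun h' => hJI ⟨h, h'⟩)).symm

end IsTerminal

/-- If the inverse of a strict linear order `lt` on `E` is a strict
well-order, then the `lt`-terminal intervals are strictly well-ordered by inclusion. -/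
theorem terminal_intervals_wellordered {E : Type*} (lt : E → E → Prop)
    (hlin : IsStrictTotalOrder E lt)
    (hinv : IsWellOrder E (fun x y => lt y x)) :
    IsWellOrder {I : Set E // ∀ x y, lt x y → x ∈ I → y ∈ I}
      (fun I J => I.1 ⊂ J.1) :=
  { toIsWellFounded := ⟨IsTerminal.wellFounded_ssubset hinv.wf⟩
    toTrichotomous := IsTerminal.trichotomous_ssubset }
end

section
/- Let s, t : C* → C be strategy profiles agreeing outside the subtree rooted at γγ' (i.e., on C* \ γγ'C*). If g_a(γγ', s) ⊆ g_a(γγ', t), then g_a(γ, s) ⊆ g_a(γ, t). -/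
variable {C A O : Type*}

/-- The prefix of length `n` of an infinite play. -/
def pref (p : ℕ → C) (n : ℕ) : List C := List.ofFn (fun i : Fin n => p (i : ℕ))

/-- Plays compatible with a partial strategy profile. -/
def Plays (s : List C → Option C) : Set (ℕ → C) :=
  {p | ∀ (n : ℕ) (c : C), s (pref p n) = some c → p n = c}

/-- The history of length n induced by a total strategy profile. -/
def hist (t : List C → C) : ℕ → List C
  | 0 => []
  | n + 1 => hist t n ++ [t (hist t n)]

/-- The play induced by a total strategy profile: p(t)_n = t(p(t)_{<n}). -/
def play (t : List C → C) (n : ℕ) : C := t (hist t n)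

open Classical in
/-- Restriction of a partial strategy profile to a set of histories. -/
noncomputable def restr (s : List C → Option C) (X : Set (List C)) (γ : List C) : Option C :=
  if γ ∈ X then s γ else none

/-- Restriction of a total strategy profile to a set of histories (as a partial one). -/
noncomputable def restrT (s : List C → C) (X : Set (List C)) : List C → Option C :=
  restr (fun γ => some (s γ)) X

/-- γC^* : finite sequences extending γ. -/
def ext (γ : List C) : Set (List C) := {δ | γ <+: δ}

/-- γC^ω : infinite sequences extending γ. -/
def extω (γ : List C) : Set (ℕ → C) := {p | pref p γ.length = γ}


/-- A <ₐ-terminal interval. -/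
def Terminal (lt : O → O → Prop) (I : Set O) : Prop := ∀ x y, lt x y → x ∈ I → y ∈ I

/-- The guarantee g_a(γ, s) of agent a at node γ under strategy profile s. -/
noncomputable def guar (d : List C → A) (v : (ℕ → C) → O) (lt : A → O → O → Prop)
    (a : A) (γ : List C) (s : List C → C) : Set O :=
  {o | ∃ p ∈ Plays (restrT s {δ | δ ∈ ext γ ∧ d δ = a}) ∩ extω γ, lt a (v p) o ∨ v p = o}

/-- The best guarantee G_a(γ). -/
noncomputable def bestGuar (d : List C → A) (v : (ℕ → C) → O) (lt : A → O → O → Prop)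
    (a : A) (γ : List C) : Set O :=
  ⋂ s : List C → C, guar d v lt a γ s

/-- Nash equilibrium of an infinite sequential game. -/
def NashEq (d : List C → A) (v : (ℕ → C) → O) (prec : A → O → O → Prop)
    (s : List C → C) : Prop :=
  ∀ (a : A) (s' : List C → C), (∀ γ, d γ ≠ a → s' γ = s γ) →
    ¬ prec a (v (play s)) (v (play s'))

/-- Winning strategy for agent a (owning D) in ⟨C, D, W⟩. -/
def WinA (D : Set (List C)) (W : Set (ℕ → C)) (sa : List C → C) : Prop :=
  ∀ t : List C → C, (∀ γ ∈ D, t γ = sa γ) → play t ∈ W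

/-- Winning strategy for agent b (owning C^* \ D) in ⟨C, D, W⟩. -/
def WinB (D : Set (List C)) (W : Set (ℕ → C)) (sb : List C → C) : Prop :=
  ∀ t : List C → C, (∀ γ ∉ D, t γ = sb γ) → play t ∉ W

/-- Determinacy of the two-agent win-lose game ⟨C, D, W⟩. -/
def Determined (D : Set (List C)) (W : Set (ℕ → C)) : Prop :=
  (∃ sa, WinA D W sa) ∨ (∃ sb, WinB D W sb)

lemma pref_len (p : ℕ → C) (n : ℕ) : (pref p n).length = n := by
  simp [pref]

lemma pref_take (p : ℕ → C) {m n : ℕ} (h : n ≤ m) : pref p n = (pref p m).take n := by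
  apply List.ext_getElem
  · simp [pref, h]
  · intro i h1 h2
    simp [pref]

lemma pref_getElem (p : ℕ → C) {m n : ℕ} (h : n < m) :
    (pref p m)[n]'(by simpa [pref_len] using h) = p n := by
  simp [pref]

lemma mem_Plays_restrT (p : ℕ → C) (s : List C → C) (X : Set (List C)) :
    p ∈ Plays (restrT s X) ↔ ∀ n, pref p n ∈ X → p n = s (pref p n) := by
  constructor
  · intro hp n hn
    exact hp n _ (by simp [restrT, restr, hn])
  · intro hp n c hc
    by_cases hX : pref p n ∈ X
    · simp [restrT, restr, hX] at hc
      rw [hp n hX, hc]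
    · simp [restrT, restr, hX] at hc

lemma extω_pref {γ : List C} {p : ℕ → C} (h : p ∈ extω γ) {n : ℕ} (hn : γ.length ≤ n) :
    pref p n = γ ++ (pref p n).drop γ.length := by
  conv_lhs => rw [← List.take_append_drop γ.length (pref p n)]
  rw [← pref_take p hn, h]

lemma prefix_pref {γ : List C} {p : ℕ → C} (h : p ∈ extω γ) {n : ℕ} (hn : γ.length ≤ n) :
    γ <+: pref p n := by
  rw [← h, pref_take p hn]
  exact List.take_prefix _ _

lemma pref_fun_eq {p q : ℕ → C} {m n : ℕ} (h : pref p m = pref q m) (hn : n < m) : p n = q n := by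
  have h1 : n < (pref p m).length := by simpa [pref_len] using hn
  have h2 := List.getElem_of_eq h h1
  rwa [pref_getElem p hn, pref_getElem q hn] at h2

lemma extω_of_prefix_pref {γ : List C} {p : ℕ → C} {n : ℕ} (h : γ <+: pref p n) :
    p ∈ extω γ := by
  have hlen : γ.length ≤ n := by
    have := h.length_le
    simpa [pref_len] using this
  have := List.prefix_iff_eq_take.mp h
  show pref p γ.length = γ
  rw [pref_take p hlen, ← this]

/-- If s and t agree outside the subtree rooted at γγ' and
g_a(γγ', s) ⊆ g_a(γγ', t), then g_a(γ, s) ⊆ g_a(γ, t). -/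
theorem guar_monotone_outside {C A O : Type*} [Nonempty C] [Nonempty A] [Nonempty O]
    (d : List C → A) (v : (ℕ → C) → O) (lt : A → O → O → Prop)
    (hlt : ∀ a, IsStrictTotalOrder O (lt a))
    (a : A) (γ γ' : List C) (s t : List C → C)
    (hagree : ∀ δ, δ ∉ ext (γ ++ γ') → s δ = t δ)
    (hsub : guar d v lt a (γ ++ γ') s ⊆ guar d v lt a (γ ++ γ') t) :
    guar d v lt a γ s ⊆ guar d v lt a γ t := by
  intro o ho
  obtain ⟨p, ⟨hp, hpγ⟩, hvo⟩ := ho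
  rw [mem_Plays_restrT] at hp
  by_cases hc : p ∈ extω (γ ++ γ')
  · -- p extends γγ' : use hsub
    have hpo : o ∈ guar d v lt a (γ ++ γ') s := by
      refine ⟨p, ⟨?_, hc⟩, hvo⟩
      rw [mem_Plays_restrT]
      intro n hn
      exact hp n ⟨(List.prefix_append γ γ').trans hn.1, hn.2⟩
    obtain ⟨q, ⟨hq, hqγγ'⟩, hvq⟩ := hsub hpo
    rw [mem_Plays_restrT] at hq
    refine ⟨q, ⟨?_, extω_of_prefix_pref ((List.prefix_append γ γ').trans
      (prefix_pref hqγγ' le_rfl))⟩, hvq⟩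
    rw [mem_Plays_restrT]
    intro n hn
    by_cases h2 : pref q n ∈ ext (γ ++ γ')
    · exact hq n ⟨h2, hn.2⟩
    · -- n < |γγ'|, intermediate node
      have hlen : n < (γ ++ γ').length := by
        by_contra hge
        exact h2 (prefix_pref hqγγ' (le_of_not_gt hge))
      have hpq : pref p n = pref q n := by
        rw [pref_take p hlen.le, pref_take q hlen.le, hc, hqγγ']
      have hpn : p n = q n := pref_fun_eq (by rw [hc, hqγγ']) hlen
      have hmem : pref p n ∈ ext γ ∧ d (pref p n) = a := by rw [hpq]; exact hn
      have hnotin : pref p n ∉ ext (γ ++ γ') := by rw [hpq]; exact h2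
      rw [← hpq, ← hpn, hp n hmem, hagree _ hnotin]
  · -- p does not extend γγ' : p itself works for t
    refine ⟨p, ⟨?_, hpγ⟩, hvo⟩
    rw [mem_Plays_restrT]
    intro n hn
    have hnotin : pref p n ∉ ext (γ ++ γ') := fun h => hc (extω_of_prefix_pref h)
    rw [hp n hn, hagree _ hnotin]
end

section
/- In an infinite sequential game where each inverse preference <_a⁻¹ is a strict well-order on O, for every agent a and node γ ∈ C* there exists a strategy profile μ such that g_a(γ, μ) equals the best guarantee G_a(γ) := ⋂_{s : C* → C} g_a(γ, s). That is, agents can secure their best possible guarantee at each node. -/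
variable {C A O : Type*}

/-! Every guarantee is upward closed for `<ₐ`. As `>ₐ` is well-founded, the outcomes missed by
some guarantee have a `<ₐ`-largest element `M`, missed by some `g_a(γ, μ)`. Every missed outcome is
`≤ₐ M`, so upward closedness makes `g_a(γ, μ)` miss it too: `g_a(γ, μ)` is the intersection. -/

theorem exists_eq_iInter_of_terminal {ι : Type*} [Nonempty ι] {lt : O → O → Prop}
    (hwo : IsWellOrder O fun x y => lt y x) {I : ι → Set O} (hI : ∀ i, Terminal lt (I i)) :
    ∃ i, I i = ⋂ j, I j := by
  by_cases hmissed : ∃ o j, o ∉ I j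
  · obtain ⟨M, ⟨i, hMi⟩, hM_max⟩ := hwo.wf.has_min {o | ∃ j, o ∉ I j} hmissed
    refine ⟨i, (Set.subset_iInter fun j o ho => ?_).antisymm (Set.iInter_subset I i)⟩
    by_contra hoj
    rcases trichotomous_of (fun x y => lt y x) M o with hlt | rfl | hgt
    · exact hMi (hI i o M hlt ho)
    · exact hMi ho
    · exact hM_max o ⟨j, hoj⟩ hgt
  · push Not at hmissed
    have hall : ∀ j, I j = Set.univ := fun j => Set.eq_univ_of_forall fun o => hmissed o j
    exact ⟨Classical.arbitrary ι, by simp only [hall, Set.iInter_univ]⟩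

theorem terminal_guar (d : List C → A) (v : (ℕ → C) → O) (lt : A → O → O → Prop) (a : A)
    [IsTrans O (lt a)] (γ : List C) (s : List C → C) : Terminal (lt a) (guar d v lt a γ s) := by
  rintro x y hxy ⟨p, hp, hle | rfl⟩
  · exact ⟨p, hp, Or.inl (_root_.trans hle hxy)⟩
  · exact ⟨p, hp, Or.inl hxy⟩

theorem best_guarantee_attained_general {C A O : Type*} [Nonempty C]
    (d : List C → A) (v : (ℕ → C) → O) (lt : A → O → O → Prop)
    (hwo : ∀ a, IsWellOrder O (fun x y => lt a y x)) :
    ∀ (a : A) (γ : List C), ∃ μ : List C → C,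
      guar d v lt a γ μ = bestGuar d v lt a γ := by
  intro a γ
  have : IsWellOrder O (fun x y => lt a y x) := hwo a
  have : IsTrans O (lt a) := ⟨fun x y z hxy hyz => trans_of (fun x y => lt a y x) hyz hxy⟩
  exact exists_eq_iInter_of_terminal (hwo a) fun s => terminal_guar d v lt a γ s

/-- If each inverse preference is a strict well-order, every agent
can secure his or her best guarantee at each node. -/
theorem best_guarantee_attained {C A O : Type*} [Nonempty C] [Nonempty A] [Nonempty O]
    (d : List C → A) (v : (ℕ → C) → O) (lt : A → O → O → Prop)
    (hwo : ∀ a, IsWellOrder O (fun x y => lt a y x)) :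
    ∀ (a : A) (γ : List C), ∃ μ : List C → C,
      guar d v lt a γ μ = bestGuar d v lt a γ :=
  best_guarantee_attained_general d v lt hwo
end

section
/- In the deepening construction (s_n)_{n ∈ ℕ}, for all n, k ∈ ℕ, the profiles s_{n+k} and s_n agree outside the subtree rooted at the length-n prefix of the play induced by s_n: s_{n+k}|_{C* \ p(s_n)_{<n}C*} = s_n|_{C* \ p(s_n)_{<n}C*}. Consequently p(s_{n+k})_{<n} = p(s_n)_{<n}. -/
variable {C A O : Type*}

/-- The deepening construction: at step n, the owner a of the length-n node γ of the
current induced play refines his/her strategy inside the subtree rooted at γ to attain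
the best guarantee there, unless the guarantee is already the best one. -/
def IsDeepening {C A O : Type*} (d : List C → A) (v : (ℕ → C) → O)
    (lt : A → O → O → Prop) (s : ℕ → List C → C) : Prop :=
  ∀ n : ℕ,
    (guar d v lt (d (pref (play (s n)) n)) (pref (play (s n)) n) (s n)
        = bestGuar d v lt (d (pref (play (s n)) n)) (pref (play (s n)) n) →
      s (n + 1) = s n) ∧
    (guar d v lt (d (pref (play (s n)) n)) (pref (play (s n)) n) (s n)
        ≠ bestGuar d v lt (d (pref (play (s n)) n)) (pref (play (s n)) n) →
      ∃ μ : List C → C,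
        guar d v lt (d (pref (play (s n)) n)) (pref (play (s n)) n) μ
          = bestGuar d v lt (d (pref (play (s n)) n)) (pref (play (s n)) n) ∧
        (∀ δ, δ ∈ ext (pref (play (s n)) n) ∧ d δ = d (pref (play (s n)) n) →
          s (n + 1) δ = μ δ) ∧
        (∀ δ, ¬ (δ ∈ ext (pref (play (s n)) n) ∧ d δ = d (pref (play (s n)) n)) →
          s (n + 1) δ = s n δ))

lemma hist_length (t : List C → C) : ∀ n, (hist t n).length = n
  | 0 => rfl
  | n + 1 => by simp [hist, hist_length t n]

lemma hist_prefix (t : List C → C) {n m : ℕ} (h : n ≤ m) : hist t n <+: hist t m := by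
  induction m with
  | zero => simp_all
  | succ m ih =>
    rcases Nat.lt_or_ge n (m + 1) with h' | h'
    · exact (ih (Nat.lt_succ_iff.mp h')).trans ⟨[t (hist t m)], rfl⟩
    · have : n = m + 1 := le_antisymm h h'
      simp [this]

lemma pref_succ (p : ℕ → C) (n : ℕ) : pref p (n + 1) = pref p n ++ [p n] := by
  rw [pref, List.ofFn_succ', List.concat_eq_append]
  simp [pref]

lemma hist_eq_pref (t : List C → C) : ∀ n, hist t n = pref (play t) n
  | 0 => rfl
  | n + 1 => by
    rw [hist, hist_eq_pref t n, pref_succ, play, hist_eq_pref t n]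

lemma hist_agree {t t' : List C → C} {γ : List C}
    (h : ∀ δ, δ ∉ ext γ → t' δ = t δ) :
    ∀ j, j ≤ γ.length → hist t' j = hist t j := by
  intro j
  induction j with
  | zero => intro _; rfl
  | succ j ih =>
    intro hj
    have hj' : j < γ.length := Nat.lt_of_succ_le hj
    have hh := ih (Nat.le_of_lt hj')
    have hmem : hist t j ∉ ext γ := by
      intro hmem
      have := hmem.length_le
      rw [hist_length] at this
      omega
    rw [hist, hist, hh, h _ hmem]

lemma pref_agree {t t' : List C → C} {γ : List C}
    (h : ∀ δ, δ ∉ ext γ → t' δ = t δ) {n : ℕ} (hn : n ≤ γ.length) :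
    pref (play t') n = pref (play t) n := by
  unfold pref
  congr 1
  funext i
  have hi : (i : ℕ) < γ.length := lt_of_lt_of_le i.2 hn
  have hmem : hist t (i : ℕ) ∉ ext γ := by
    intro hmem
    have := hmem.length_le
    rw [hist_length] at this
    omega
  rw [play, play, hist_agree h _ (Nat.le_of_lt hi), h _ hmem]

/-- In the deepening construction, s_{n+k} agrees with s_n outside
the subtree rooted at the length-n prefix of the play induced by s_n; consequently
the induced plays agree up to length n. -/
theorem deepening_agree {C A O : Type*} [Nonempty C] [Nonempty A] [Nonempty O]
    (d : List C → A) (v : (ℕ → C) → O) (lt : A → O → O → Prop)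
    (hwo : ∀ a, IsWellOrder O (fun x y => lt a y x))
    (s : ℕ → List C → C) (hs : IsDeepening d v lt s) :
    ∀ n k : ℕ,
      (∀ δ, δ ∉ ext (pref (play (s n)) n) → s (n + k) δ = s n δ) ∧
      pref (play (s (n + k))) n = pref (play (s n)) n := by
  intro n k
  induction k with
  | zero => exact ⟨fun δ _ => rfl, rfl⟩
  | succ k ih =>
    obtain ⟨h1, h2⟩ := ih
    have hγ'len : (pref (play (s (n + k))) (n + k)).length = n + k := by simp [pref]
    have hpre : pref (play (s n)) n <+: pref (play (s (n + k))) (n + k) := by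
      rw [← h2, ← hist_eq_pref, ← hist_eq_pref]
      exact hist_prefix _ (Nat.le_add_right n k)
    -- s (n+k+1) agrees with s (n+k) outside ext γ'
    have hagree : ∀ δ, δ ∉ ext (pref (play (s (n + k))) (n + k)) → s (n + k + 1) δ = s (n + k) δ := by
      obtain ⟨heq, hne⟩ := hs (n + k)
      by_cases hg : guar d v lt (d (pref (play (s (n + k))) (n + k))) (pref (play (s (n + k))) (n + k)) (s (n + k)) = bestGuar d v lt (d (pref (play (s (n + k))) (n + k))) (pref (play (s (n + k))) (n + k))
      · intro δ _; rw [heq hg]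
      · obtain ⟨μ, _, _, hout⟩ := hne hg
        intro δ hδ
        exact hout δ (fun hc => hδ hc.1)
    have key : n + (k + 1) = n + k + 1 := rfl
    constructor
    · intro δ hδ
      have hδ' : δ ∉ ext (pref (play (s (n + k))) (n + k)) := fun hc => hδ (hpre.trans hc)
      rw [key, hagree δ hδ', h1 δ hδ]
    · rw [key, pref_agree hagree (by omega), h2]
end
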